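/- arXiv:2307.11867 — 2 statements merged into one kernel-verified Lean document; each statement's English description precedes it below -/
import Mathlib

section
/- Under the assumptions of the previous identity (ξ > 0, τ > 0, p + q ≥ 1), the increased fleet profit from joining a nonempty platoon satisfies F̂ - F ≥ ξτ/2 > 0; in particular, joining a nonempty predicted platoon always strictly increases the fleet's platooning profit. -/
/-! Writing `s = p + q`, the gain per unit `ξτ` is `(s² + p) / (s (s + 1))`, which is at least
`1/2` because `2(s² + p) - s(s + 1) = s(s - 1) + 2p ≥ 0` for `s ≥ 1`. -/

lemma platoon_gain_eq (s p : ℝ) (hs : 0 < s) :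
    s / (s + 1) * (p + 1) - (s - 1) / s * p = (s ^ 2 + p) / (s * (s + 1)) := by
  field_simp
  ring

lemma one_half_le_platoon_gain (s p : ℝ) (hs : 1 ≤ s) (hp : 0 ≤ p) :
    1 / 2 ≤ s / (s + 1) * (p + 1) - (s - 1) / s * p := by
  rw [platoon_gain_eq s p (by linarith), div_le_div_iff₀ two_pos (by positivity)]
  nlinarith

theorem stmt_4 (ξ τ : ℝ) (hξ : 0 < ξ) (hτ : 0 < τ) (p q : ℕ) (hpq : 1 ≤ p + q) :
    ξ * τ / 2 ≤
      ξ * τ * (((p : ℝ) + q) / ((p : ℝ) + q + 1)) * ((p : ℝ) + 1) -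
        ξ * τ * ((((p : ℝ) + q - 1)) / ((p : ℝ) + q)) * (p : ℝ) ∧
    0 < ξ * τ * (((p : ℝ) + q) / ((p : ℝ) + q + 1)) * ((p : ℝ) + 1) -
        ξ * τ * ((((p : ℝ) + q - 1)) / ((p : ℝ) + q)) * (p : ℝ) := by
  have hξτ : 0 < ξ * τ := mul_pos hξ hτ
  have hs : (1 : ℝ) ≤ p + q := by exact_mod_cast hpq
  have hgain := one_half_le_platoon_gain _ _ hs p.cast_nonneg
  have hbound : ξ * τ / 2 ≤
      ξ * τ * (((p : ℝ) + q) / ((p : ℝ) + q + 1)) * ((p : ℝ) + 1) -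
        ξ * τ * ((((p : ℝ) + q - 1)) / ((p : ℝ) + q)) * (p : ℝ) := by
    calc ξ * τ / 2 = ξ * τ * (1 / 2) := by ring
      _ ≤ ξ * τ * ((p + q) / (p + q + 1) * (p + 1) - (p + q - 1) / (p + q) * p) :=
        mul_le_mul_of_nonneg_left hgain hξτ.le
      _ = _ := by ring
  exact ⟨hbound, (half_pos hξτ).trans_le hbound⟩
end

section
/- Let D ⊂ ℝ be a finite set (predicted departure times of potential platoon partners), t ∈ ℝ an arrival time, B ≥ 0 a waiting budget, and τ ∈ ℝ. Let r : ℝ → ℝ satisfy r(w) = 0 for all w ∈ [0, B] with t + w ∉ D, and r(w) ≥ 0 for all w. Let J : ℝ → ℝ be monotonically nonincreasing. Define Q(w) = r(w) + J(t + w + τ) and the discrete decision set Dᵂ = {d - t | d ∈ D, 0 ≤ d - t ≤ B} ∪ {0}. Then sup over w ∈ [0, B] of Q(w) equals max over w ∈ Dᵂ of Q(w), and the supremum is attained at a point of Dᵂ. -/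
/-!
Off the partners' departure times the stage reward vanishes, so waiting there only delays the
arrival at the next hub, which cannot increase the nonincreasing future reward: every such wait
is dominated by not waiting at all. Hence every wait in `[0, B]` is dominated by a point of the
finite set `Dᵂ`, and a maximiser of `Q` over `Dᵂ` is a maximiser over all of `[0, B]`.
-/

open Set

theorem Set.exists_isGreatest_image_of_dominated {α β : Type*} [LinearOrder β] {f : α → β}
    {S T : Set α} (hT : T.Finite) (hTne : T.Nonempty) (hTS : T ⊆ S)
    (hdom : ∀ x ∈ S, ∃ y ∈ T, f x ≤ f y) : ∃ y ∈ T, IsGreatest (f '' S) (f y) := by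
  obtain ⟨y, hyT, hymax⟩ := T.exists_max_image f hT hTne
  refine ⟨y, hyT, mem_image_of_mem f (hTS hyT), forall_mem_image.2 fun x hx => ?_⟩
  obtain ⟨z, hzT, hxz⟩ := hdom x hx
  exact hxz.trans (hymax z hzT)

/-- The paper's finite decision set `Dᵂ`. -/
def waitSet (D : Set ℝ) (t B : ℝ) : Set ℝ :=
  {w | ∃ d ∈ D, w = d - t ∧ 0 ≤ w ∧ w ≤ B} ∪ {0}

section WaitSet

variable {D : Set ℝ} {t B : ℝ}

theorem zero_mem_waitSet : (0 : ℝ) ∈ waitSet D t B :=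
  Or.inr rfl

theorem waitSet_finite (hD : D.Finite) : (waitSet D t B).Finite := by
  refine Finite.union ((hD.image (· - t)).subset ?_) (finite_singleton 0)
  rintro _ ⟨d, hd, rfl, -⟩
  exact mem_image_of_mem _ hd

theorem waitSet_subset_Icc (hB : 0 ≤ B) : waitSet D t B ⊆ Icc 0 B := by
  rintro w (⟨-, -, -, hw0, hwB⟩ | rfl)
  exacts [⟨hw0, hwB⟩, ⟨le_rfl, hB⟩]

theorem exists_mem_waitSet_ge {τ : ℝ} {r J : ℝ → ℝ}
    (hr0 : ∀ w ∈ Icc 0 B, t + w ∉ D → r w = 0) (hrnn : ∀ w, 0 ≤ r w) (hJ : Antitone J)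
    {w : ℝ} (hw : w ∈ Icc 0 B) :
    ∃ w' ∈ waitSet D t B, r w + J (t + w + τ) ≤ r w' + J (t + w' + τ) := by
  by_cases hwD : t + w ∈ D
  · exact ⟨w, Or.inl ⟨t + w, hwD, by ring, hw⟩, le_rfl⟩
  · have hJw : J (t + w + τ) ≤ J (t + 0 + τ) := hJ (by linarith [hw.1])
    refine ⟨0, zero_mem_waitSet, ?_⟩
    linarith [hr0 w hw hwD, hrnn 0]

end WaitSet

theorem stmt_9 (D : Set ℝ) (hD : D.Finite) (t B τ : ℝ) (hB : 0 ≤ B)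
    (r J : ℝ → ℝ)
    (hr0 : ∀ w ∈ Set.Icc 0 B, t + w ∉ D → r w = 0)
    (hrnn : ∀ w, 0 ≤ r w)
    (hJ : Antitone J)
    (Q : ℝ → ℝ) (hQ : ∀ w, Q w = r w + J (t + w + τ))
    (DW : Set ℝ) (hDW : DW = {w | ∃ d ∈ D, w = d - t ∧ 0 ≤ w ∧ w ≤ B} ∪ {0}) :
    ∃ w ∈ DW, Q w = sSup (Q '' Set.Icc 0 B) ∧ ∀ w' ∈ Set.Icc 0 B, Q w' ≤ Q w := by
  obtain rfl : Q = fun w => r w + J (t + w + τ) := funext hQ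
  obtain rfl : DW = waitSet D t B := hDW
  obtain ⟨w, hw, hgreatest⟩ := exists_isGreatest_image_of_dominated (waitSet_finite hD)
    ⟨0, zero_mem_waitSet⟩ (waitSet_subset_Icc hB) fun _ => exists_mem_waitSet_ge hr0 hrnn hJ
  exact ⟨w, hw, hgreatest.csSup_eq.symm, fun w' hw' => hgreatest.2 (mem_image_of_mem _ hw')⟩
end
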